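/- arXiv:1706.06722 — 3 statements merged into one kernel-verified Lean document; each statement's English description precedes it below -/
import Mathlib

section
/- Let (X, ‖·‖, ≼) be a normal partially ordered Banach space and D a nonempty closed bi-inductive subset of X. Let T be an isotone and δ-compact set-valued mapping from D to nonempty closed bounded subsets of D. Suppose there exist points x₀ ∈ D and x₁ ∈ T x₀ with x₀ ≼ x₁. Then the fixed point set 𝔉(T) = {x ∈ D : x ∈ T x} is a nonempty bi-chain-complete subset of D, and T has both an ≼-maximal and an ≼-minimal fixed point. (Theorem 3.6 (b), (b')) -/
/-- The partial order on a Banach space induced by a cone `K`: `x ≼ y` iff `y - x ∈ K`. -/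
def coneLe {X : Type*} [NormedAddCommGroup X] (K : Set X) (x y : X) : Prop := y - x ∈ K

/-!
Isotonicity turns `x₀ ≼ x₁` into an increasing orbit `xₙ₊₁ ∈ T xₙ`. Bi-inductivity bounds it in
order, normality then bounds it in norm, so by δ-compactness it lies in a compact set. There an
increasing sequence has a unique cluster point (all cluster points are upper bounds of each other,
the order being closed), hence converges, and δ-continuity makes its limit a fixed point.

The same compactness shows that a bounded chain of fixed points is separable, so it has a cofinal
increasing sequence; the limit of that sequence is the supremum of the chain and lies in the fixed
point set, which is closed by δ-continuity. Infima follow by reversing the order, and Zorn's lemma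
gives maximal and minimal fixed points.
-/

open Filter Topology Metric Set Function TopologicalSpace

section Relation

variable {α : Type*} {r : α → α → Prop}

theorem exists_maximal_mem_of_nonempty_chains_bounded [IsTrans α r] [Std.Antisymm r]
    {F : Set α} (hF : F.Nonempty)
    (h : ∀ C ⊆ F, C.Nonempty → IsChain r C → ∃ b ∈ F, ∀ c ∈ C, r c b) :
    ∃ m ∈ F, ∀ y ∈ F, r m y → m = y := by
  have : Nonempty F := hF.to_subtype
  obtain ⟨m, hm⟩ := exists_maximal_of_nonempty_chains_bounded (r := fun a b : F => r a b)
    (fun C hC hCne => by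
      have hCval : IsChain r (Subtype.val '' C) := by
        rintro _ ⟨a, ha, rfl⟩ _ ⟨b, hb, rfl⟩ hne
        exact hC ha hb fun h => hne (congrArg _ h)
      obtain ⟨b, hbF, hb⟩ := h _ (image_subset_iff.2 fun a _ => a.2) (hCne.image _) hCval
      exact ⟨⟨b, hbF⟩, fun a ha => hb a (mem_image_of_mem _ ha)⟩)
    (fun hab hbc => _root_.trans hab hbc)
  exact ⟨m, m.2, fun y hy hmy => antisymm hmy (hm ⟨y, hy⟩ hmy)⟩

theorem isChain_range_of_rel_of_le {u : ℕ → α} (hu : ∀ ⦃m n⦄, m ≤ n → r (u m) (u n)) :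
    IsChain r (range u) := by
  rintro _ ⟨m, rfl⟩ _ ⟨n, rfl⟩ -
  exact (le_total m n).imp (hu ·) (hu ·)

theorem exists_monotone_orbit [IsPreorder α r] {D : Set α} {T : α → Set α}
    (hTD : ∀ x ∈ D, T x ⊆ D) (hiso : ∀ x ∈ D, ∀ y ∈ D, r x y → ∀ z ∈ T x, ∃ w ∈ T y, r z w)
    {x₀ x₁ : α} (hx₀ : x₀ ∈ D) (hx₁ : x₁ ∈ T x₀) (h₀₁ : r x₀ x₁) :
    ∃ u : ℕ → α, u 0 = x₀ ∧ (∀ n, u n ∈ D) ∧ (∀ n, u (n + 1) ∈ T (u n)) ∧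
      ∀ ⦃m n⦄, m ≤ n → r (u m) (u n) := by
  set P := {q : α × α | q.1 ∈ D ∧ q.2 ∈ T q.1 ∧ r q.1 q.2}
  have step : ∀ q ∈ P, ∃ q' ∈ P, q'.1 = q.2 := by
    rintro ⟨x, y⟩ ⟨hx, hy, hxy⟩
    obtain ⟨w, hw, hyw⟩ := hiso x hx y (hTD x hx hy) hxy y hy
    exact ⟨(y, w), ⟨hTD x hx hy, hw, hyw⟩, rfl⟩
  choose! f hfP hf using step
  have hq : ∀ n, f^[n] (x₀, x₁) ∈ P := fun n => MapsTo.iterate hfP n ⟨hx₀, hx₁, h₀₁⟩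
  have hsucc : ∀ n, (f^[n + 1] (x₀, x₁)).1 = (f^[n] (x₀, x₁)).2 := fun n => by
    rw [iterate_succ_apply', hf _ (hq n)]
  refine ⟨fun n => (f^[n] (x₀, x₁)).1, rfl, fun n => (hq n).1, fun n => ?_,
    Nat.rel_of_forall_rel_succ_of_le r fun n => ?_⟩
  · simpa only [hsucc] using (hq n).2.1
  · simpa only [hsucc] using (hq n).2.2

end Relation

section ClosedOrder

variable {X : Type*} [TopologicalSpace X] {r : X → X → Prop}

theorem isClosed_setOf_rel_left (hr : IsClosed {p : X × X | r p.1 p.2}) (a : X) :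
    IsClosed {x | r a x} :=
  hr.preimage (continuous_const.prodMk continuous_id)

theorem isClosed_setOf_rel_right (hr : IsClosed {p : X × X | r p.1 p.2}) (b : X) :
    IsClosed {x | r x b} :=
  hr.preimage (continuous_id.prodMk continuous_const)

theorem exists_tendsto_of_monotone_of_isCompact [Std.Antisymm r]
    (hr : IsClosed {p : X × X | r p.1 p.2}) {S : Set X} (hS : IsCompact S) {u : ℕ → X}
    (hu : ∀ n, u n ∈ S) (hmono : ∀ ⦃m n⦄, m ≤ n → r (u m) (u n)) :
    ∃ p ∈ S, Tendsto u atTop (𝓝 p) ∧ ∀ n, r (u n) p := by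
  have hub : ∀ q, MapClusterPt q atTop u → ∀ n, r (u n) q := fun q hq n =>
    (isClosed_setOf_rel_left hr (u n)).mem_of_mapClusterPt hq
      (eventually_atTop.2 ⟨n, fun _ => (hmono ·)⟩)
  have hle : ∀ p q, MapClusterPt p atTop u → MapClusterPt q atTop u → r p q := fun p q hp hq =>
    (isClosed_setOf_rel_right hr q).mem_of_mapClusterPt hp (.of_forall (hub q hq))
  obtain ⟨p, hpS, hp⟩ := hS.exists_mapClusterPt (f := atTop) (tendsto_principal.2 (.of_forall hu))
  exact ⟨p, hpS, hS.tendsto_nhds_of_unique_mapClusterPt (.of_forall hu)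
    fun q _ hq => antisymm (hle q p hq hp) (hle p q hp hq), hub p hp⟩

variable [PseudoMetrizableSpace X] [IsPartialOrder X r]

theorem IsChain.exists_lub_mem (hr : IsClosed {p : X × X | r p.1 p.2}) {F C : Set X}
    (hF : IsClosed F) (hCF : C ⊆ F) (hCne : C.Nonempty) (hC : IsChain r C)
    (hCc : IsCompact (closure C)) :
    ∃ s ∈ F, (∀ c ∈ C, r c s) ∧ ∀ b, (∀ c ∈ C, r c b) → r s b := by
  obtain ⟨t, htC, htc, hCt⟩ := (hCc.isSeparable.mono subset_closure).exists_countable_dense_subset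
  obtain ⟨c, rfl⟩ := htc.exists_eq_range (closure_nonempty_iff.mp (hCne.mono hCt))
  have hdir : Directed r c := directedOn_range.mp (hC.mono htC).directedOn
  set y := fun n => c (hdir.sequence c n)
  have hyC : ∀ n, y n ∈ C := fun n => htC (mem_range_self _)
  obtain ⟨s, hs, hys, hys_ub⟩ := exists_tendsto_of_monotone_of_isCompact hr hCc
    (fun n => subset_closure (hyC n)) (Nat.rel_of_forall_rel_succ_of_le r hdir.sequence_mono_nat)
  refine ⟨s, closure_minimal hCF hF hs, fun x hx => ?_, fun b hb =>
    (isClosed_setOf_rel_right hr b).mem_of_tendsto hys (.of_forall fun n => hb _ (hyC n))⟩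
  have hcs : range c ⊆ {x | r x s} := by
    rintro _ ⟨i, rfl⟩
    exact _root_.trans (hdir.rel_sequence i) (hys_ub _)
  exact closure_minimal hcs (isClosed_setOf_rel_right hr s) (hCt hx)

theorem IsChain.exists_glb_mem (hr : IsClosed {p : X × X | r p.1 p.2}) {F C : Set X}
    (hF : IsClosed F) (hCF : C ⊆ F) (hCne : C.Nonempty) (hC : IsChain r C)
    (hCc : IsCompact (closure C)) :
    ∃ i ∈ F, (∀ c ∈ C, r i c) ∧ ∀ a, (∀ c ∈ C, r a c) → r a i :=
  hC.symm.exists_lub_mem (r := swap r) (hr.preimage continuous_swap) hF hCF hCne hCc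

theorem exists_maximal_mem_of_isCompact_closure_chains (hr : IsClosed {p : X × X | r p.1 p.2})
    {F : Set X} (hF : IsClosed F) (hFne : F.Nonempty)
    (hcomp : ∀ C ⊆ F, C.Nonempty → IsChain r C → IsCompact (closure C)) :
    ∃ m ∈ F, ∀ y ∈ F, r m y → m = y :=
  exists_maximal_mem_of_nonempty_chains_bounded hFne fun C hCF hCne hC =>
    let ⟨s, hsF, hs, _⟩ := hC.exists_lub_mem hr hF hCF hCne (hcomp C hCF hCne hC)
    ⟨s, hsF, hs⟩

theorem exists_minimal_mem_of_isCompact_closure_chains (hr : IsClosed {p : X × X | r p.1 p.2})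
    {F : Set X} (hF : IsClosed F) (hFne : F.Nonempty)
    (hcomp : ∀ C ⊆ F, C.Nonempty → IsChain r C → IsCompact (closure C)) :
    ∃ m ∈ F, ∀ y ∈ F, r y m → m = y :=
  exists_maximal_mem_of_isCompact_closure_chains (r := swap r) (hr.preimage continuous_swap) hF
    hFne fun C hCF hCne hC => hcomp C hCF hCne hC.symm

end ClosedOrder

section SetValued

variable {X : Type*} [PseudoMetricSpace X]

theorem mem_of_tendsto_hausdorffDist {s : ℕ → Set X} {t : Set X} {v : ℕ → X} {p : X}
    (ht : IsClosed t) (hfin : ∀ n, hausdorffEDist (s n) t ≠ ⊤)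
    (hst : Tendsto (fun n => hausdorffDist (s n) t) atTop (𝓝 0)) (hv : ∀ n, v n ∈ s n)
    (hvp : Tendsto v atTop (𝓝 p)) : p ∈ t := by
  have hbound : ∀ n, infDist p t ≤ dist p (v n) + hausdorffDist (s n) t := fun n =>
    calc infDist p t ≤ infDist (v n) t + dist p (v n) := infDist_le_infDist_add_dist
      _ ≤ hausdorffDist (s n) t + dist p (v n) := by
        gcongr; exact infDist_le_hausdorffDist_of_mem (hv n) (hfin n)
      _ = dist p (v n) + hausdorffDist (s n) t := add_comm _ _
  have hlim : Tendsto (fun n => dist p (v n) + hausdorffDist (s n) t) atTop (𝓝 0) := by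
    simpa using ((tendsto_const_nhds (x := p)).dist hvp).add hst
  have htne : t.Nonempty := nonempty_of_hausdorffEDist_ne_top ⟨v 0, hv 0⟩ (hfin 0)
  exact (ht.mem_iff_infDist_zero htne).2
    (le_antisymm (ge_of_tendsto' hlim hbound) infDist_nonneg)

def HausdorffContinuousOn (T : X → Set X) (D : Set X) : Prop :=
  ∀ (u : ℕ → X) (p : X), (∀ n, u n ∈ D) → p ∈ D → Tendsto u atTop (𝓝 p) →
    Tendsto (fun n => hausdorffDist (T (u n)) (T p)) atTop (𝓝 0)

variable {D : Set X} {T : X → Set X}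

theorem mem_apply_of_tendsto (hTne : ∀ x ∈ D, (T x).Nonempty)
    (hTclosed : ∀ x ∈ D, IsClosed (T x)) (hTbdd : ∀ x ∈ D, Bornology.IsBounded (T x))
    (hTcont : HausdorffContinuousOn T D)
    {u v : ℕ → X} {p : X} (hu : ∀ n, u n ∈ D) (hp : p ∈ D) (hup : Tendsto u atTop (𝓝 p))
    (hv : ∀ n, v n ∈ T (u n)) (hvp : Tendsto v atTop (𝓝 p)) : p ∈ T p :=
  mem_of_tendsto_hausdorffDist (hTclosed p hp)
    (fun n => hausdorffEDist_ne_top_of_nonempty_of_bounded (hTne _ (hu n)) (hTne p hp)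
      (hTbdd _ (hu n)) (hTbdd p hp))
    (hTcont u p hu hp hup) hv hvp

theorem isClosed_setOf_mem_apply (hD : IsClosed D) (hTne : ∀ x ∈ D, (T x).Nonempty)
    (hTclosed : ∀ x ∈ D, IsClosed (T x)) (hTbdd : ∀ x ∈ D, Bornology.IsBounded (T x))
    (hTcont : HausdorffContinuousOn T D) :
    IsClosed {x | x ∈ D ∧ x ∈ T x} := by
  refine IsSeqClosed.isClosed fun u p hu hup => ?_
  have hpD : p ∈ D := hD.mem_of_tendsto hup (.of_forall fun n => (hu n).1)
  exact ⟨hpD, mem_apply_of_tendsto hTne hTclosed hTbdd hTcont (fun n => (hu n).1) hpD hup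
    (fun n => (hu n).2) hup⟩

theorem exists_mem_apply_of_monotone_orbit {r : X → X → Prop} [Std.Antisymm r]
    (hr : IsClosed {p : X × X | r p.1 p.2}) (hD : IsClosed D)
    (hTne : ∀ x ∈ D, (T x).Nonempty)
    (hTclosed : ∀ x ∈ D, IsClosed (T x)) (hTbdd : ∀ x ∈ D, Bornology.IsBounded (T x))
    (hTcont : HausdorffContinuousOn T D)
    {u : ℕ → X} (hu : ∀ n, u n ∈ D) (huT : ∀ n, u (n + 1) ∈ T (u n))
    (hmono : ∀ ⦃m n⦄, m ≤ n → r (u m) (u n)) (hcomp : IsCompact (closure (⋃ x ∈ range u, T x))) :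
    ∃ p, p ∈ D ∧ p ∈ T p := by
  obtain ⟨p, -, hup, -⟩ := exists_tendsto_of_monotone_of_isCompact hr hcomp
    (u := fun n => u (n + 1)) (fun n => subset_closure (mem_biUnion (mem_range_self n) (huT n)))
    fun m n hmn => hmono (Nat.succ_le_succ hmn)
  have hpD : p ∈ D := hD.mem_of_tendsto hup (.of_forall fun n => hu (n + 1))
  exact ⟨p, hpD, mem_apply_of_tendsto hTne hTclosed hTbdd hTcont (fun n => hu (n + 1)) hpD hup
    (fun n => huT (n + 1)) (hup.comp (tendsto_add_atTop_nat 1))⟩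

end SetValued

section ConeOrder

variable {X : Type*} [NormedAddCommGroup X] {K : Set X}

theorem coneLe_isPartialOrder (hK0 : (0 : X) ∈ K) (hKadd : ∀ x ∈ K, ∀ y ∈ K, x + y ∈ K)
    (hKpointed : ∀ x ∈ K, -x ∈ K → x = 0) : IsPartialOrder X (coneLe K) where
  refl x := by simpa [coneLe] using hK0
  trans x y z hxy hyz := by simpa [coneLe] using hKadd _ hyz _ hxy
  antisymm x y hxy hyx := (sub_eq_zero.mp (hKpointed _ hxy (by simpa [coneLe] using hyx))).symm

theorem isClosed_setOf_coneLe (hK : IsClosed K) : IsClosed {p : X × X | coneLe K p.1 p.2} :=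
  hK.preimage (continuous_snd.sub continuous_fst)

theorem isBounded_of_coneLe {l : ℝ} (hl : ∀ x y : X, x ∈ K → y - x ∈ K → ‖x‖ ≤ l * ‖y‖)
    {C : Set X} {a b : X} (ha : ∀ c ∈ C, coneLe K a c) (hb : ∀ c ∈ C, coneLe K c b) :
    Bornology.IsBounded C :=
  isBounded_closedBall.subset fun c hc => by
    rw [mem_closedBall, dist_eq_norm]
    exact hl _ (b - a) (ha c hc) (by simpa [coneLe] using hb c hc)

end ConeOrder

theorem setvalued_fixed_points_biChainComplete_of_normal_general
    {X : Type*} [NormedAddCommGroup X]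
    (K : Set X) (hKclosed : IsClosed K) (hK0 : (0 : X) ∈ K)
    (hKadd : ∀ x ∈ K, ∀ y ∈ K, x + y ∈ K)
    (hKpointed : ∀ x ∈ K, -x ∈ K → x = 0)
    -- normality of the order
    (hnormal : ∃ l : ℝ, 0 < l ∧ ∀ x y : X, x ∈ K → y - x ∈ K → ‖x‖ ≤ l * ‖y‖)
    -- D is a nonempty closed bi-inductive subset of X
    (D : Set X) (hDclosed : IsClosed D)
    (hDbiInd : ∀ C ⊆ D, C.Nonempty → IsChain (coneLe K) C →
      (∃ b ∈ D, ∀ c ∈ C, coneLe K c b) ∧ (∃ a ∈ D, ∀ c ∈ C, coneLe K a c))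
    -- T has nonempty closed bounded values contained in D
    (T : X → Set X)
    (hTval : ∀ x ∈ D, (T x).Nonempty ∧ IsClosed (T x) ∧ Bornology.IsBounded (T x) ∧ T x ⊆ D)
    -- T is isotone (≼-increasing upward)
    (hiso : ∀ x ∈ D, ∀ y ∈ D, coneLe K x y → ∀ z ∈ T x, ∃ w ∈ T y, coneLe K z w)
    -- T is δ-continuous
    (hTcont : ∀ (u : ℕ → X) (p : X), (∀ n, u n ∈ D) → p ∈ D →
      Filter.Tendsto u Filter.atTop (nhds p) →
      Filter.Tendsto (fun n => Metric.hausdorffDist (T (u n)) (T p)) Filter.atTop (nhds 0))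
    -- T maps bounded sets into relatively compact sets
    (hTcomp : ∀ C ⊆ D, Bornology.IsBounded C → IsCompact (closure (⋃ x ∈ C, T x)))
    -- starting points
    (x₀ : X) (hx₀ : x₀ ∈ D) (x₁ : X) (hx₁ : x₁ ∈ T x₀) (h₀₁ : coneLe K x₀ x₁) :
    ({x | x ∈ D ∧ x ∈ T x}).Nonempty ∧
    (∀ C ⊆ {x | x ∈ D ∧ x ∈ T x}, C.Nonempty → IsChain (coneLe K) C →
      (∃ b, ∀ c ∈ C, coneLe K c b) → (∃ a, ∀ c ∈ C, coneLe K a c) →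
      (∃ s, s ∈ {x | x ∈ D ∧ x ∈ T x} ∧ (∀ c ∈ C, coneLe K c s) ∧
        ∀ b, (∀ c ∈ C, coneLe K c b) → coneLe K s b) ∧
      (∃ i, i ∈ {x | x ∈ D ∧ x ∈ T x} ∧ (∀ c ∈ C, coneLe K i c) ∧
        ∀ a, (∀ c ∈ C, coneLe K a c) → coneLe K a i)) ∧
    (∃ m, m ∈ {x | x ∈ D ∧ x ∈ T x} ∧
      ∀ y ∈ {x | x ∈ D ∧ x ∈ T x}, coneLe K m y → m = y) ∧
    (∃ m', m' ∈ {x | x ∈ D ∧ x ∈ T x} ∧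
      ∀ y ∈ {x | x ∈ D ∧ x ∈ T x}, coneLe K y m' → m' = y) := by
  obtain ⟨l, -, hl⟩ := hnormal
  choose hTne hTclosed hTbdd hTD using hTval
  have := coneLe_isPartialOrder hK0 hKadd hKpointed
  have hr := isClosed_setOf_coneLe hKclosed
  have hF := isClosed_setOf_mem_apply hDclosed hTne hTclosed hTbdd hTcont
  have hcompact : ∀ C ⊆ {x | x ∈ D ∧ x ∈ T x}, (∃ a, ∀ c ∈ C, coneLe K a c) →
      (∃ b, ∀ c ∈ C, coneLe K c b) → IsCompact (closure C) := fun C hCF ⟨_, ha⟩ ⟨_, hb⟩ =>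
    (hTcomp C (fun x hx => (hCF hx).1) (isBounded_of_coneLe hl ha hb)).of_isClosed_subset
      isClosed_closure (closure_mono fun x hx => mem_biUnion hx (hCF hx).2)
  have hchains : ∀ C ⊆ {x | x ∈ D ∧ x ∈ T x}, C.Nonempty → IsChain (coneLe K) C →
      IsCompact (closure C) := fun C hCF hCne hC =>
    let ⟨⟨b, _, hb⟩, ⟨a, _, ha⟩⟩ := hDbiInd C (fun x hx => (hCF hx).1) hCne hC
    hcompact C hCF ⟨a, ha⟩ ⟨b, hb⟩
  have hFne : {x | x ∈ D ∧ x ∈ T x}.Nonempty := by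
    obtain ⟨u, rfl, huD, huT, hmono⟩ := exists_monotone_orbit hTD hiso hx₀ hx₁ h₀₁
    obtain ⟨⟨b, -, hb⟩, -⟩ := hDbiInd _ (range_subset_iff.2 huD) (range_nonempty u)
      (isChain_range_of_rel_of_le hmono)
    exact exists_mem_apply_of_monotone_orbit hr hDclosed hTne hTclosed hTbdd hTcont huD huT hmono
      (hTcomp _ (range_subset_iff.2 huD)
        (isBounded_of_coneLe hl (forall_mem_range.2 fun n => hmono n.zero_le) hb))
  exact ⟨hFne, fun C hCF hCne hC ha hb =>
    ⟨hC.exists_lub_mem hr hF hCF hCne (hcompact C hCF hb ha),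
      hC.exists_glb_mem hr hF hCF hCne (hcompact C hCF hb ha)⟩,
    exists_maximal_mem_of_isCompact_closure_chains hr hF hFne hchains,
    exists_minimal_mem_of_isCompact_closure_chains hr hF hFne hchains⟩

/-- Theorem 3.6 (b), (b'): in a normal partially ordered Banach space, for an isotone,
δ-compact set-valued map `T` on a nonempty closed bi-inductive set `D`, with nonempty
closed bounded values in `D`, and with `x₀ ∈ D`, `x₁ ∈ T x₀`, `x₀ ≼ x₁`, the fixed point
set `𝔉(T)` is nonempty and bi-chain-complete, and `T` has both a maximal and a minimal
fixed point. -/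
theorem setvalued_fixed_points_biChainComplete_of_normal
    {X : Type*} [NormedAddCommGroup X] [NormedSpace ℝ X] [CompleteSpace X]
    (K : Set X) (hKclosed : IsClosed K) (hK0 : (0 : X) ∈ K)
    (hKadd : ∀ x ∈ K, ∀ y ∈ K, x + y ∈ K)
    (hKsmul : ∀ c : ℝ, 0 ≤ c → ∀ x ∈ K, c • x ∈ K)
    (hKpointed : ∀ x ∈ K, -x ∈ K → x = 0)
    -- normality of the order
    (hnormal : ∃ l : ℝ, 0 < l ∧ ∀ x y : X, x ∈ K → y - x ∈ K → ‖x‖ ≤ l * ‖y‖)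
    -- D is a nonempty closed bi-inductive subset of X
    (D : Set X) (hDne : D.Nonempty) (hDclosed : IsClosed D)
    (hDbiInd : ∀ C ⊆ D, C.Nonempty → IsChain (coneLe K) C →
      (∃ b ∈ D, ∀ c ∈ C, coneLe K c b) ∧ (∃ a ∈ D, ∀ c ∈ C, coneLe K a c))
    -- T has nonempty closed bounded values contained in D
    (T : X → Set X)
    (hTval : ∀ x ∈ D, (T x).Nonempty ∧ IsClosed (T x) ∧ Bornology.IsBounded (T x) ∧ T x ⊆ D)
    -- T is isotone (≼-increasing upward)
    (hiso : ∀ x ∈ D, ∀ y ∈ D, coneLe K x y → ∀ z ∈ T x, ∃ w ∈ T y, coneLe K z w)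
    -- T is δ-continuous
    (hTcont : ∀ (u : ℕ → X) (p : X), (∀ n, u n ∈ D) → p ∈ D →
      Filter.Tendsto u Filter.atTop (nhds p) →
      Filter.Tendsto (fun n => Metric.hausdorffDist (T (u n)) (T p)) Filter.atTop (nhds 0))
    -- T maps bounded sets into relatively compact sets
    (hTcomp : ∀ C ⊆ D, Bornology.IsBounded C → IsCompact (closure (⋃ x ∈ C, T x)))
    -- starting points
    (x₀ : X) (hx₀ : x₀ ∈ D) (x₁ : X) (hx₁ : x₁ ∈ T x₀) (h₀₁ : coneLe K x₀ x₁) :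
    ({x | x ∈ D ∧ x ∈ T x}).Nonempty ∧
    (∀ C ⊆ {x | x ∈ D ∧ x ∈ T x}, C.Nonempty → IsChain (coneLe K) C →
      (∃ b, ∀ c ∈ C, coneLe K c b) → (∃ a, ∀ c ∈ C, coneLe K a c) →
      (∃ s, s ∈ {x | x ∈ D ∧ x ∈ T x} ∧ (∀ c ∈ C, coneLe K c s) ∧
        ∀ b, (∀ c ∈ C, coneLe K c b) → coneLe K s b) ∧
      (∃ i, i ∈ {x | x ∈ D ∧ x ∈ T x} ∧ (∀ c ∈ C, coneLe K i c) ∧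
        ∀ a, (∀ c ∈ C, coneLe K a c) → coneLe K a i)) ∧
    (∃ m, m ∈ {x | x ∈ D ∧ x ∈ T x} ∧
      ∀ y ∈ {x | x ∈ D ∧ x ∈ T x}, coneLe K m y → m = y) ∧
    (∃ m', m' ∈ {x | x ∈ D ∧ x ∈ T x} ∧
      ∀ y ∈ {x | x ∈ D ∧ x ∈ T x}, coneLe K y m' → m' = y) :=
  setvalued_fixed_points_biChainComplete_of_normal_general K hKclosed hK0 hKadd hKpointed hnormal D
    hDclosed hDbiInd T hTval hiso hTcont hTcomp x₀ hx₀ x₁ hx₁ h₀₁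
end

section
/- Let (X, ‖·‖, ≼) be a regular partially ordered Banach space and D a nonempty closed bi-inductive subset of X. Let F : D → D be an ≼-increasing demi-continuous mapping and suppose there is a point x₀ ∈ D with x₀ ≼ F x₀. Then the fixed point set 𝔉(F) = {x ∈ D : F x = x} is a nonempty bi-chain-complete subset of D, and F has both an ≼-maximal and an ≼-minimal fixed point. (Theorem 4.1 (b), (b')) -/
open Set Filter Topology Function OrderDual

/-- `IsOrderRegular αᵒᵈ` is the corresponding statement for bounded decreasing sequences. -/
def IsOrderRegular (α : Type*) [TopologicalSpace α] [Preorder α] : Prop :=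
  ∀ u : ℕ → α, Monotone u → BddAbove (range u) → ∃ p, Tendsto u atTop (𝓝 p)

section Chains

variable {α : Type*} [TopologicalSpace α] [Preorder α] {C : Set α}

theorem isChain_closure [OrderClosedTopology α] (hC : IsChain (· ≤ ·) C) :
    IsChain (· ≤ ·) (closure C) := by
  have htotal : closure C ×ˢ closure C ⊆ {p : α × α | p.1 ≤ p.2 ∨ p.2 ≤ p.1} := by
    rw [← closure_prod_eq]
    refine closure_minimal (fun p hp => hC.total hp.1 hp.2) ?_
    exact (isClosed_le continuous_fst continuous_snd).union
      (isClosed_le continuous_snd continuous_fst)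
  exact fun x hx y hy _ => @htotal (x, y) ⟨hx, hy⟩

theorem IsChain.exists_subseq_tendsto
    (hreg : IsOrderRegular α) (hreg' : IsOrderRegular αᵒᵈ)
    (hC : IsChain (· ≤ ·) C) (hCa : BddAbove C) (hCb : BddBelow C)
    {x : ℕ → α} (hx : ∀ n, x n ∈ C) :
    ∃ p, ∃ φ : ℕ → ℕ, StrictMono φ ∧ Tendsto (x ∘ φ) atTop (𝓝 p) := by
  obtain ⟨φ, hφ⟩ := exists_increasing_or_nonincreasing_subseq' (· ≤ ·) x
  have hφC : range (x ∘ φ) ⊆ C := range_subset_iff.2 fun n => hx _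
  rcases hφ with hφ | hφ
  · obtain ⟨p, hp⟩ := hreg _ (monotone_nat_of_le_succ hφ) (hCa.mono hφC)
    exact ⟨p, φ, φ.strictMono, hp⟩
  · have hanti_φ : Antitone (x ∘ φ) := antitone_nat_of_succ_le fun n =>
      (hC.total (hx _) (hx _)).resolve_left (hφ n (n + 1) n.lt_succ_self)
    obtain ⟨p, hp⟩ := hreg' (toDual ∘ x ∘ φ) hanti_φ (hCb.mono hφC).dual
    exact ⟨p, φ, φ.strictMono, hp⟩

theorem IsChain.isCompact_closure [TopologicalSpace.PseudoMetrizableSpace α] [OrderClosedTopology α]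
    (hreg : IsOrderRegular α) (hreg' : IsOrderRegular αᵒᵈ)
    (hC : IsChain (· ≤ ·) C) (hCa : BddAbove C) (hCb : BddBelow C) :
    IsCompact (closure C) := by
  refine IsSeqCompact.isCompact fun x hx => ?_
  obtain ⟨p, φ, hφ, hp⟩ := (isChain_closure hC).exists_subseq_tendsto hreg hreg'
    (bddAbove_closure.2 hCa) (bddBelow_closure.2 hCb) hx
  exact ⟨p, isClosed_closure.mem_of_tendsto hp (Eventually.of_forall fun n => hx _), φ, hφ, hp⟩

theorem IsChain.exists_isLUB_mem_closure [OrderClosedTopology α] (hC : IsChain (· ≤ ·) C)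
    (hne : C.Nonempty) (hcpt : IsCompact (closure C)) : ∃ p ∈ closure C, IsLUB C p := by
  have := hne.to_subtype
  have hdir : Directed (· ⊇ ·) fun c : C => closure C ∩ Ici (c : α) := fun c d => by
    obtain ⟨z, hz, hcz, hdz⟩ := hC.directedOn c c.2 d d.2
    exact ⟨⟨z, hz⟩, inter_subset_inter_right _ (Ici_subset_Ici.2 hcz),
      inter_subset_inter_right _ (Ici_subset_Ici.2 hdz)⟩
  obtain ⟨p, hp⟩ := IsCompact.nonempty_iInter_of_directed_nonempty_isCompact_isClosed _ hdir
    (fun c => ⟨c, subset_closure c.2, le_rfl⟩) (fun _ => hcpt.inter_right isClosed_Ici)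
    (fun _ => isClosed_closure.inter isClosed_Ici)
  have hpC : p ∈ closure C := (mem_iInter.1 hp ⟨_, hne.some_mem⟩).1
  exact ⟨p, hpC, fun c hc => (mem_iInter.1 hp ⟨c, hc⟩).2,
    fun b hb => closure_minimal hb isClosed_Iic hpC⟩

theorem IsChain.exists_isGLB_mem_closure [OrderClosedTopology α] (hC : IsChain (· ≤ ·) C)
    (hne : C.Nonempty) (hcpt : IsCompact (closure C)) : ∃ p ∈ closure C, IsGLB C p :=
  IsChain.exists_isLUB_mem_closure (α := αᵒᵈ) hC.symm hne hcpt

end Chains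

theorem IsOrderRegular.dual {α : Type*} [AddCommGroup α] [PartialOrder α]
    [IsOrderedAddMonoid α] [TopologicalSpace α] [ContinuousNeg α] (hreg : IsOrderRegular α) :
    IsOrderRegular αᵒᵈ := by
  intro u hu ⟨a, ha⟩
  obtain ⟨p, hp⟩ := hreg (fun n => -ofDual (u n)) (fun m n hmn => neg_le_neg (hu hmn))
    ⟨-ofDual a, by rintro _ ⟨n, rfl⟩; exact neg_le_neg (ha ⟨n, rfl⟩)⟩
  have hlim := hp.neg
  simp only [neg_neg] at hlim
  exact ⟨toDual (-p), hlim⟩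

section Demicontinuity

variable {X : Type*} [AddCommGroup X] [TopologicalSpace X] [Module ℝ X]

def DemicontinuousOn (F : X → X) (D : Set X) : Prop :=
  ∀ u : ℕ → X, (∀ n, u n ∈ D) → ∀ p ∈ D, Tendsto u atTop (𝓝 p) →
    ∀ f : X →L[ℝ] ℝ, Tendsto (fun n => f (F (u n))) atTop (𝓝 (f (F p)))

variable [SeparatingDual ℝ X] {F : X → X} {D : Set X}

theorem DemicontinuousOn.isFixedPt_of_tendsto (hF : DemicontinuousOn F D) {u : ℕ → X} {p : X}
    (huD : ∀ n, u n ∈ D) (hpD : p ∈ D) (hu : Tendsto u atTop (𝓝 p))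
    (hFu : Tendsto (F ∘ u) atTop (𝓝 p)) : IsFixedPt F p :=
  SeparatingDual.eq_iff_forall_dual_eq.2 fun f =>
    tendsto_nhds_unique (hF u huD p hpD hu f) ((f.continuous.tendsto p).comp hFu)

theorem DemicontinuousOn.isClosed_inter_fixedPoints [SequentialSpace X]
    (hF : DemicontinuousOn F D) (hD : IsClosed D) : IsClosed (D ∩ fixedPoints F) := by
  refine IsSeqClosed.isClosed fun u p hu hup => ?_
  have hpD : p ∈ D := hD.mem_of_tendsto hup (Eventually.of_forall fun n => (hu n).1)
  exact ⟨hpD, hF.isFixedPt_of_tendsto (fun n => (hu n).1) hpD hup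
    (hup.congr fun n => ((hu n).2 : F (u n) = u n).symm)⟩

end Demicontinuity

theorem MonotoneOn.monotone_iterate_of_le_map {α : Type*} [Preorder α] {F : α → α} {D : Set α}
    (hF : MonotoneOn F D) (hmaps : MapsTo F D D) {x : α} (hx : x ∈ D) (hxF : x ≤ F x) :
    Monotone fun n => F^[n] x := by
  refine monotone_nat_of_le_succ fun n => ?_
  induction n with
  | zero => exact hxF
  | succ n ih =>
    simpa only [iterate_succ_apply'] using hF (hmaps.iterate n hx) (hmaps.iterate (n + 1) hx) ih

section FixedPoints

variable {X : Type*} [NormedAddCommGroup X] [NormedSpace ℝ X] [Preorder X] {D : Set X}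
  {F : X → X}

theorem DemicontinuousOn.exists_mem_fixedPoints (hF : DemicontinuousOn F D) (hD : IsClosed D)
    (hFmono : MonotoneOn F D) (hmaps : MapsTo F D D)
    (hreg : IsOrderRegular X)
    (hDchain : ∀ C ⊆ D, C.Nonempty → IsChain (· ≤ ·) C → BddAbove C)
    {x : X} (hx : x ∈ D) (hxF : x ≤ F x) : (D ∩ fixedPoints F).Nonempty := by
  have horbit := hFmono.monotone_iterate_of_le_map hmaps hx hxF
  have horbitD : ∀ n, F^[n] x ∈ D := fun n => hmaps.iterate n hx
  obtain ⟨p, hp⟩ := hreg _ horbit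
    (hDchain _ (range_subset_iff.2 horbitD) (range_nonempty _) horbit.isChain_range)
  have hpD : p ∈ D := hD.mem_of_tendsto hp (Eventually.of_forall horbitD)
  refine ⟨p, hpD, hF.isFixedPt_of_tendsto horbitD hpD hp ?_⟩
  exact ((tendsto_add_atTop_iff_nat 1).2 hp).congr fun n => iterate_succ_apply' F n x

variable [OrderClosedTopology X]

theorem DemicontinuousOn.exists_isLUB_mem_fixedPoints (hF : DemicontinuousOn F D)
    (hD : IsClosed D)
    (hreg : IsOrderRegular X) (hreg' : IsOrderRegular Xᵒᵈ)
    {C : Set X} (hCF : C ⊆ D ∩ fixedPoints F) (hne : C.Nonempty) (hC : IsChain (· ≤ ·) C)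
    (hCa : BddAbove C) (hCb : BddBelow C) : ∃ s ∈ D ∩ fixedPoints F, IsLUB C s := by
  obtain ⟨s, hs, hlub⟩ := hC.exists_isLUB_mem_closure hne (hC.isCompact_closure hreg hreg' hCa hCb)
  exact ⟨s, (hF.isClosed_inter_fixedPoints hD).closure_subset_iff.2 hCF hs, hlub⟩

theorem DemicontinuousOn.exists_isGLB_mem_fixedPoints (hF : DemicontinuousOn F D)
    (hD : IsClosed D)
    (hreg : IsOrderRegular X) (hreg' : IsOrderRegular Xᵒᵈ)
    {C : Set X} (hCF : C ⊆ D ∩ fixedPoints F) (hne : C.Nonempty) (hC : IsChain (· ≤ ·) C)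
    (hCa : BddAbove C) (hCb : BddBelow C) : ∃ s ∈ D ∩ fixedPoints F, IsGLB C s := by
  obtain ⟨s, hs, hglb⟩ := hC.exists_isGLB_mem_closure hne (hC.isCompact_closure hreg hreg' hCa hCb)
  exact ⟨s, (hF.isClosed_inter_fixedPoints hD).closure_subset_iff.2 hCF hs, hglb⟩

theorem DemicontinuousOn.exists_maximal_mem_fixedPoints (hF : DemicontinuousOn F D)
    (hD : IsClosed D)
    (hreg : IsOrderRegular X) (hreg' : IsOrderRegular Xᵒᵈ)
    (hDchain : ∀ C ⊆ D, C.Nonempty → IsChain (· ≤ ·) C → BddAbove C ∧ BddBelow C)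
    {x : X} (hx : x ∈ D ∩ fixedPoints F) : ∃ m, Maximal (· ∈ D ∩ fixedPoints F) m := by
  have hub : ∀ C ⊆ D ∩ fixedPoints F, IsChain (· ≤ ·) C → ∀ y ∈ C,
      ∃ s ∈ D ∩ fixedPoints F, s ∈ upperBounds C := fun C hCF hC y hy => by
    obtain ⟨hCa, hCb⟩ := hDchain C (hCF.trans inter_subset_left) ⟨y, hy⟩ hC
    obtain ⟨s, hs, hlub⟩ := hF.exists_isLUB_mem_fixedPoints hD hreg hreg' hCF ⟨y, hy⟩ hC hCa hCb
    exact ⟨s, hs, hlub.1⟩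
  obtain ⟨m, -, hm⟩ := zorn_le_nonempty₀ _ hub x hx
  exact ⟨m, hm⟩

theorem DemicontinuousOn.exists_minimal_mem_fixedPoints (hF : DemicontinuousOn F D)
    (hD : IsClosed D)
    (hreg : IsOrderRegular X) (hreg' : IsOrderRegular Xᵒᵈ)
    (hDchain : ∀ C ⊆ D, C.Nonempty → IsChain (· ≤ ·) C → BddAbove C ∧ BddBelow C)
    {x : X} (hx : x ∈ D ∩ fixedPoints F) : ∃ m, Minimal (· ∈ D ∩ fixedPoints F) m := by
  have hlb : ∀ C ⊆ D ∩ fixedPoints F, IsChain (· ≤ ·) C → ∀ y ∈ C,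
      ∃ s ∈ D ∩ fixedPoints F, s ∈ lowerBounds C := fun C hCF hC y hy => by
    obtain ⟨hCa, hCb⟩ := hDchain C (hCF.trans inter_subset_left) ⟨y, hy⟩ hC
    obtain ⟨s, hs, hglb⟩ := hF.exists_isGLB_mem_fixedPoints hD hreg hreg' hCF ⟨y, hy⟩ hC hCa hCb
    exact ⟨s, hs, hglb.1⟩
  obtain ⟨m, -, hm⟩ := zorn_le_nonempty₀ (α := Xᵒᵈ) _ (fun C hCF hC => hlb C hCF hC.symm) x hx
  exact ⟨m, hm⟩

end FixedPoints

abbrev conePartialOrder {X : Type*} [NormedAddCommGroup X] (K : Set X) (hK0 : (0 : X) ∈ K)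
    (hKadd : ∀ x ∈ K, ∀ y ∈ K, x + y ∈ K) (hKpointed : ∀ x ∈ K, -x ∈ K → x = 0) :
    PartialOrder X where
  le := coneLe K
  le_refl x := by simpa [coneLe] using hK0
  le_trans x y z hxy hyz := by simpa [coneLe] using hKadd _ hyz _ hxy
  le_antisymm x y hxy hyx := (sub_eq_zero.1 (hKpointed _ hxy (by simpa [coneLe] using hyx))).symm

theorem demicontinuous_fixed_points_biChainComplete_of_regular_general
    {X : Type*} [NormedAddCommGroup X] [NormedSpace ℝ X]
    (K : Set X) (hKclosed : IsClosed K) (hK0 : (0 : X) ∈ K)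
    (hKadd : ∀ x ∈ K, ∀ y ∈ K, x + y ∈ K)
    (hKpointed : ∀ x ∈ K, -x ∈ K → x = 0)
    -- regularity: every ≼-increasing ≼-upper-bounded sequence converges in norm
    (hreg : ∀ u : ℕ → X, (∀ n, coneLe K (u n) (u (n + 1))) →
      (∃ b, ∀ n, coneLe K (u n) b) → ∃ p, Filter.Tendsto u Filter.atTop (nhds p))
    -- D is a nonempty closed bi-inductive subset of X
    (D : Set X) (hDclosed : IsClosed D)
    (hDbiInd : ∀ C ⊆ D, C.Nonempty → IsChain (coneLe K) C →
      (∃ b ∈ D, ∀ c ∈ C, coneLe K c b) ∧ (∃ a ∈ D, ∀ c ∈ C, coneLe K a c))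
    -- F maps D into D and is ≼-increasing
    (F : X → X) (hFmaps : ∀ x ∈ D, F x ∈ D)
    (hFinc : ∀ x ∈ D, ∀ y ∈ D, coneLe K x y → coneLe K (F x) (F y))
    -- F is demi-continuous: norm convergence is sent to weak convergence
    (hFdemi : ∀ (u : ℕ → X), (∀ n, u n ∈ D) → ∀ p ∈ D,
      Filter.Tendsto u Filter.atTop (nhds p) →
      ∀ f : X →L[ℝ] ℝ, Filter.Tendsto (fun n => f (F (u n))) Filter.atTop (nhds (f (F p))))
    -- starting point
    (x₀ : X) (hx₀ : x₀ ∈ D) (h₀ : coneLe K x₀ (F x₀)) :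
    ({x | x ∈ D ∧ F x = x}).Nonempty ∧
    (∀ C ⊆ {x | x ∈ D ∧ F x = x}, C.Nonempty → IsChain (coneLe K) C →
      (∃ b, ∀ c ∈ C, coneLe K c b) → (∃ a, ∀ c ∈ C, coneLe K a c) →
      (∃ s, s ∈ {x | x ∈ D ∧ F x = x} ∧ (∀ c ∈ C, coneLe K c s) ∧
        ∀ b, (∀ c ∈ C, coneLe K c b) → coneLe K s b) ∧
      (∃ i, i ∈ {x | x ∈ D ∧ F x = x} ∧ (∀ c ∈ C, coneLe K i c) ∧
        ∀ a, (∀ c ∈ C, coneLe K a c) → coneLe K a i)) ∧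
    (∃ m, m ∈ {x | x ∈ D ∧ F x = x} ∧
      ∀ y ∈ {x | x ∈ D ∧ F x = x}, coneLe K m y → m = y) ∧
    (∃ m', m' ∈ {x | x ∈ D ∧ F x = x} ∧
      ∀ y ∈ {x | x ∈ D ∧ F x = x}, coneLe K y m' → m' = y) := by
  let := conePartialOrder K hK0 hKadd hKpointed
  have : OrderClosedTopology X := ⟨hKclosed.preimage (continuous_snd.sub continuous_fst)⟩
  have : IsOrderedAddMonoid X :=
    { add_le_add_left a b (hab : b - a ∈ K) c :=
        show b + c - (a + c) ∈ K by rwa [add_sub_add_right_eq_sub] }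
  have hX : IsOrderRegular X :=
    fun u hu ⟨b, hb⟩ => hreg u (fun n => hu n.le_succ) ⟨b, fun n => hb ⟨n, rfl⟩⟩
  have hDchain : ∀ C ⊆ D, C.Nonempty → IsChain (· ≤ ·) C → BddAbove C ∧ BddBelow C :=
    fun C hC hne hch =>
      let ⟨⟨b, _, hb⟩, ⟨a, _, ha⟩⟩ := hDbiInd C hC hne hch
      ⟨⟨b, hb⟩, ⟨a, ha⟩⟩
  have hF : DemicontinuousOn F D := hFdemi
  obtain ⟨p, hp⟩ := hF.exists_mem_fixedPoints hDclosed hFinc hFmaps hX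
    (fun C hC hne hch => (hDchain C hC hne hch).1) hx₀ h₀
  refine ⟨⟨p, hp⟩, fun C hCF hne hC hCa hCb => ⟨?_, ?_⟩, ?_, ?_⟩
  · exact hF.exists_isLUB_mem_fixedPoints hDclosed hX hX.dual hCF hne hC hCa hCb
  · exact hF.exists_isGLB_mem_fixedPoints hDclosed hX hX.dual hCF hne hC hCa hCb
  · obtain ⟨m, hm⟩ := hF.exists_maximal_mem_fixedPoints hDclosed hX hX.dual hDchain hp
    exact ⟨m, hm.1, fun y hy hmy => hm.eq_of_le hy hmy⟩
  · obtain ⟨m, hm⟩ := hF.exists_minimal_mem_fixedPoints hDclosed hX hX.dual hDchain hp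
    exact ⟨m, hm.1, fun y hy hym => (hm.eq_of_le hy hym).symm⟩

/-- Theorem 4.1 (b), (b'): in a regular partially ordered Banach space, for an
≼-increasing demi-continuous mapping `F : D → D` on a nonempty closed bi-inductive set
`D`, with a point `x₀ ∈ D` such that `x₀ ≼ F x₀`, the fixed point set `𝔉(F)` is a
nonempty bi-chain-complete subset of `D`, and `F` has both a maximal and a minimal
fixed point. -/
theorem demicontinuous_fixed_points_biChainComplete_of_regular
    {X : Type*} [NormedAddCommGroup X] [NormedSpace ℝ X] [CompleteSpace X]
    (K : Set X) (hKclosed : IsClosed K) (hK0 : (0 : X) ∈ K)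
    (hKadd : ∀ x ∈ K, ∀ y ∈ K, x + y ∈ K)
    (hKsmul : ∀ c : ℝ, 0 ≤ c → ∀ x ∈ K, c • x ∈ K)
    (hKpointed : ∀ x ∈ K, -x ∈ K → x = 0)
    -- regularity: every ≼-increasing ≼-upper-bounded sequence converges in norm
    (hreg : ∀ u : ℕ → X, (∀ n, coneLe K (u n) (u (n + 1))) →
      (∃ b, ∀ n, coneLe K (u n) b) → ∃ p, Filter.Tendsto u Filter.atTop (nhds p))
    -- D is a nonempty closed bi-inductive subset of X
    (D : Set X) (hDne : D.Nonempty) (hDclosed : IsClosed D)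
    (hDbiInd : ∀ C ⊆ D, C.Nonempty → IsChain (coneLe K) C →
      (∃ b ∈ D, ∀ c ∈ C, coneLe K c b) ∧ (∃ a ∈ D, ∀ c ∈ C, coneLe K a c))
    -- F maps D into D and is ≼-increasing
    (F : X → X) (hFmaps : ∀ x ∈ D, F x ∈ D)
    (hFinc : ∀ x ∈ D, ∀ y ∈ D, coneLe K x y → coneLe K (F x) (F y))
    -- F is demi-continuous: norm convergence is sent to weak convergence
    (hFdemi : ∀ (u : ℕ → X), (∀ n, u n ∈ D) → ∀ p ∈ D,
      Filter.Tendsto u Filter.atTop (nhds p) →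
      ∀ f : X →L[ℝ] ℝ, Filter.Tendsto (fun n => f (F (u n))) Filter.atTop (nhds (f (F p))))
    -- starting point
    (x₀ : X) (hx₀ : x₀ ∈ D) (h₀ : coneLe K x₀ (F x₀)) :
    ({x | x ∈ D ∧ F x = x}).Nonempty ∧
    (∀ C ⊆ {x | x ∈ D ∧ F x = x}, C.Nonempty → IsChain (coneLe K) C →
      (∃ b, ∀ c ∈ C, coneLe K c b) → (∃ a, ∀ c ∈ C, coneLe K a c) →
      (∃ s, s ∈ {x | x ∈ D ∧ F x = x} ∧ (∀ c ∈ C, coneLe K c s) ∧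
        ∀ b, (∀ c ∈ C, coneLe K c b) → coneLe K s b) ∧
      (∃ i, i ∈ {x | x ∈ D ∧ F x = x} ∧ (∀ c ∈ C, coneLe K i c) ∧
        ∀ a, (∀ c ∈ C, coneLe K a c) → coneLe K a i)) ∧
    (∃ m, m ∈ {x | x ∈ D ∧ F x = x} ∧
      ∀ y ∈ {x | x ∈ D ∧ F x = x}, coneLe K m y → m = y) ∧
    (∃ m', m' ∈ {x | x ∈ D ∧ F x = x} ∧
      ∀ y ∈ {x | x ∈ D ∧ F x = x}, coneLe K y m' → m' = y) :=
  demicontinuous_fixed_points_biChainComplete_of_regular_general K hKclosed hK0 hKadd hKpointed hreg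
    D hDclosed hDbiInd F hFmaps hFinc hFdemi x₀ hx₀ h₀
end

section
/- Let (X, ‖·‖, ≼) be a normal partially ordered Banach space whose partial order is induced by a closed convex cone K. Suppose F : K → K is an ≼-decreasing mapping satisfying condition (H¹), and F is compact. Then F has a unique fixed point x* in K, this fixed point satisfies x* ≼ F(0), and for every point z ∈ K the iterates Fⁿ z converge in norm to x* as n → ∞. (Theorem 5.2, case (a)) -/
/-!
Write `uₙ = Fⁿ 0`. Since `F` is decreasing, `F²` is increasing, and `0 ≼ F y ≼ F 0` for every
`y ∈ K`; iterating `F²` gives `u₂ₙ ≼ F²ⁿ⁺¹ y ≼ u₂ₙ₊₁`. In particular `(u₂ₙ)` is increasing and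
eventually lies in `F(F K)`, which is relatively compact because `F K ⊆ [0, F 0]` is bounded; so
`(u₂ₙ)` has a convergent subsequence, and by normality it converges, to `x` say. Continuity gives `u₂ₙ₊₁ → F x` and `F (F x) = x`, hence
`F x = x` by (H¹). Normality then squeezes every orbit `Fⁿ z` between `u₂ₙ` and `u₂ₙ₊₁`.
-/

open Filter Topology Set

section ConeOrder

variable {X : Type*} [NormedAddCommGroup X] {K : Set X}

def coneIcc (K : Set X) (a b : X) : Set X := {w | coneLe K a w ∧ coneLe K w b}

def ConeMonotoneOn (K : Set X) (G : X → X) : Prop :=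
  ∀ x ∈ K, ∀ y ∈ K, coneLe K x y → coneLe K (G x) (G y)

def ConeAntitoneOn (K : Set X) (F : X → X) : Prop :=
  ∀ x ∈ K, ∀ y ∈ K, coneLe K x y → coneLe K (F y) (F x)

def IsNormalConeWith (K : Set X) (l : ℝ) : Prop :=
  ∀ x y : X, x ∈ K → y - x ∈ K → ‖x‖ ≤ l * ‖y‖

theorem zero_coneLe_iff {x : X} : coneLe K 0 x ↔ x ∈ K := by
  simp only [coneLe, sub_zero]

theorem coneLe_trans (hKadd : ∀ x ∈ K, ∀ y ∈ K, x + y ∈ K) {x y z : X}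
    (hxy : coneLe K x y) (hyz : coneLe K y z) : coneLe K x z := by
  simpa only [coneLe, sub_add_sub_cancel] using hKadd _ hyz _ hxy

theorem coneLe_of_le_succ (hK0 : (0 : X) ∈ K) (hKadd : ∀ x ∈ K, ∀ y ∈ K, x + y ∈ K)
    {a : ℕ → X} (ha : ∀ n, coneLe K (a n) (a (n + 1))) {n m : ℕ} (hnm : n ≤ m) :
    coneLe K (a n) (a m) := by
  induction m, hnm using Nat.le_induction with
  | base => simpa only [coneLe, sub_self] using hK0
  | succ m _ ih => exact coneLe_trans hKadd ih (ha m)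

theorem ConeAntitoneOn.coneMonotoneOn_iterate_two {F : X → X} (hF : ConeAntitoneOn K F)
    (hmaps : MapsTo F K K) : ConeMonotoneOn K F^[2] :=
  fun x hx y hy hxy => hF _ (hmaps hy) _ (hmaps hx) (hF x hx y hy hxy)

theorem ConeMonotoneOn.iterate {G : X → X} (hG : ConeMonotoneOn K G) (hmaps : MapsTo G K K) :
    ∀ n, ConeMonotoneOn K G^[n]
  | 0 => fun _ _ _ _ hxy => hxy
  | n + 1 => fun x hx y hy hxy =>
    ConeMonotoneOn.iterate hG hmaps n _ (hmaps hx) _ (hmaps hy) (hG x hx y hy hxy)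

namespace IsNormalConeWith

variable {l : ℝ} (hnorm : IsNormalConeWith K l)
include hnorm

theorem norm_sub_le {a w b : X} (hw : w ∈ coneIcc K a b) : ‖w - a‖ ≤ l * ‖b - a‖ :=
  hnorm _ _ hw.1 (by simpa only [coneLe, sub_sub_sub_cancel_right] using hw.2)

theorem isBounded_of_subset_coneIcc {S : Set X} {b : X} (hS : S ⊆ coneIcc K 0 b) :
    Bornology.IsBounded S :=
  isBounded_iff_forall_norm_le.2 ⟨l * ‖b‖, fun w hw => by
    simpa only [sub_zero] using hnorm.norm_sub_le (hS hw)⟩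

theorem tendsto_of_tendsto_of_tendsto_of_mem_coneIcc {ι : Type*} {L : Filter ι}
    {a b w : ι → X} {x : X} (ha : Tendsto a L (𝓝 x)) (hb : Tendsto b L (𝓝 x))
    (hw : ∀ᶠ i in L, w i ∈ coneIcc K (a i) (b i)) : Tendsto w L (𝓝 x) := by
  have hba : Tendsto (fun i => l * ‖b i - a i‖) L (𝓝 0) := by
    simpa using ((hb.sub ha).norm.const_mul l)
  have hwa : Tendsto (fun i => w i - a i) L (𝓝 0) := by
    refine tendsto_zero_iff_norm_tendsto_zero.2 (squeeze_zero' ?_ ?_ hba)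
    · exact Eventually.of_forall fun i => norm_nonneg _
    · filter_upwards [hw] with i hi using hnorm.norm_sub_le hi
  simpa using hwa.add ha

theorem tendsto_of_coneMonotone_of_tendsto_subseq (hKclosed : IsClosed K) {a : ℕ → X}
    (hmono : ∀ n m, n ≤ m → coneLe K (a n) (a m)) {x : X} {φ : ℕ → ℕ} (hφ : StrictMono φ)
    (hlim : Tendsto (a ∘ φ) atTop (𝓝 x)) : Tendsto a atTop (𝓝 x) := by
  have hub : ∀ n, coneLe K (a n) x := fun n =>
    hKclosed.mem_of_tendsto (hlim.sub tendsto_const_nhds)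
      ((eventually_ge_atTop n).mono fun k hk => hmono n (φ k) (hk.trans hφ.le_apply))
  have hsmall : Tendsto (fun k => l * ‖x - a (φ k)‖) atTop (𝓝 0) := by
    simpa using ((hlim.const_sub x).norm.const_mul l)
  refine Metric.tendsto_atTop.2 fun ε hε => ?_
  obtain ⟨N, hN⟩ := (hsmall.eventually (gt_mem_nhds hε)).exists
  refine ⟨φ N, fun m hm => ?_⟩
  have hm' : x - a m ∈ coneIcc K 0 (x - a (φ N)) := by
    refine ⟨zero_coneLe_iff.2 (hub m), ?_⟩
    simpa only [coneLe, sub_sub_sub_cancel_left] using hmono _ _ hm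
  calc dist (a m) x = ‖x - a m‖ := by rw [dist_comm, dist_eq_norm]
    _ ≤ l * ‖x - a (φ N)‖ := by simpa only [sub_zero] using hnorm.norm_sub_le hm'
    _ < ε := hN

end IsNormalConeWith

end ConeOrder

theorem ContinuousOn.tendsto_comp_of_mem {α β ι : Type*} [TopologicalSpace α]
    [TopologicalSpace β] {f : α → β} {s : Set α} {c : α} (hf : ContinuousOn f s) (hc : c ∈ s)
    {L : Filter ι} {u : ι → α} (hu : ∀ i, u i ∈ s) (hlim : Tendsto u L (𝓝 c)) :
    Tendsto (fun i => f (u i)) L (𝓝 (f c)) :=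
  (hf c hc).tendsto.comp (tendsto_nhdsWithin_iff.2 ⟨hlim, Eventually.of_forall hu⟩)

section DecreasingMap

variable {X : Type*} [NormedAddCommGroup X] {K : Set X} {F : X → X}

theorem ConeAntitoneOn.iterate_odd_mem_coneIcc (hK0 : (0 : X) ∈ K) (hF : ConeAntitoneOn K F)
    (hmaps : MapsTo F K K) {y : X} (hy : y ∈ K) (n : ℕ) :
    F^[2 * n + 1] y ∈ coneIcc K (F^[2 * n] 0) (F^[2 * n + 1] 0) := by
  have hG := (hF.coneMonotoneOn_iterate_two hmaps).iterate (hmaps.iterate 2) n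
  rw [Function.iterate_succ_apply, Function.iterate_succ_apply, Function.iterate_mul]
  exact ⟨hG 0 hK0 _ (hmaps hy) (zero_coneLe_iff.2 (hmaps hy)),
    hG _ (hmaps hy) _ (hmaps hK0) (hF 0 hK0 y hy (zero_coneLe_iff.2 hy))⟩


theorem ConeAntitoneOn.exists_tendsto_iterate_even (hKclosed : IsClosed K) (hK0 : (0 : X) ∈ K)
    (hKadd : ∀ x ∈ K, ∀ y ∈ K, x + y ∈ K) {l : ℝ} (hnorm : IsNormalConeWith K l)
    (hF : ConeAntitoneOn K F) (hmaps : MapsTo F K K)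
    (hcomp : ∀ C ⊆ K, Bornology.IsBounded C → IsCompact (closure (F '' C))) :
    ∃ x, Tendsto (fun n => F^[2 * n] 0) atTop (𝓝 x) := by
  have hbdd : Bornology.IsBounded (F '' K) := by
    refine hnorm.isBounded_of_subset_coneIcc (b := F 0) ?_
    rintro _ ⟨y, hy, rfl⟩
    simpa using hF.iterate_odd_mem_coneIcc hK0 hmaps hy 0
  have hmem : ∀ n, F^[2 * n + 2] 0 ∈ closure (F '' (F '' K)) := fun n => by
    refine subset_closure ⟨F^[2 * n + 1] 0, ⟨F^[2 * n] 0, hmaps.iterate _ hK0, ?_⟩, ?_⟩ <;>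
      simp only [Function.iterate_succ_apply']
  obtain ⟨x, -, φ, hφ, hφlim⟩ :=
    (hcomp _ (image_subset_iff.2 hmaps) hbdd).tendsto_subseq hmem
  have hstep : ∀ n, coneLe K (F^[2 * n + 2] 0) (F^[2 * (n + 1) + 2] 0) := fun n => by
    simpa only [Function.iterate_succ_apply, mul_add] using
      (hF.iterate_odd_mem_coneIcc hK0 hmaps (hmaps hK0) (n + 1)).1
  have hlim := hnorm.tendsto_of_coneMonotone_of_tendsto_subseq hKclosed
    (fun n m => coneLe_of_le_succ hK0 hKadd hstep) hφ hφlim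
  exact ⟨x, (tendsto_add_atTop_iff_nat 1).1 (by simpa only [mul_add] using hlim)⟩

theorem ConeAntitoneOn.tendsto_iterate (hK0 : (0 : X) ∈ K) {l : ℝ}
    (hnorm : IsNormalConeWith K l) (hF : ConeAntitoneOn K F) (hmaps : MapsTo F K K) {x : X}
    (heven : Tendsto (fun n => F^[2 * n] 0) atTop (𝓝 x))
    (hodd : Tendsto (fun n => F^[2 * n + 1] 0) atTop (𝓝 x)) {z : X} (hz : z ∈ K) :
    Tendsto (fun n => F^[n] z) atTop (𝓝 x) := by
  have hhalf : Tendsto (fun m : ℕ => m / 2) atTop atTop := Nat.tendsto_div_const_atTop two_ne_zero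
  -- `m + 1 = 2 (m / 2) + 1 + m % 2`, so `F^[m+1] z` is an odd iterate of `F^[m % 2] z`
  have hmem : ∀ m, F^[m + 1] z ∈ coneIcc K (F^[2 * (m / 2)] 0) (F^[2 * (m / 2) + 1] 0) :=
    fun m => by
      have h := hF.iterate_odd_mem_coneIcc hK0 hmaps (hmaps.iterate (m % 2) hz) (m / 2)
      rwa [← Function.iterate_add_apply, add_right_comm, Nat.div_add_mod] at h
  exact (tendsto_add_atTop_iff_nat 1).1 <| hnorm.tendsto_of_tendsto_of_tendsto_of_mem_coneIcc
    (heven.comp hhalf) (hodd.comp hhalf) (Eventually.of_forall hmem)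

end DecreasingMap

theorem decreasing_compact_unique_fixed_point_of_normal_general
    {X : Type*} [NormedAddCommGroup X]
    (K : Set X) (hKclosed : IsClosed K) (hK0 : (0 : X) ∈ K)
    (hKadd : ∀ x ∈ K, ∀ y ∈ K, x + y ∈ K)
    -- normality of the order
    (hnormal : ∃ l : ℝ, 0 < l ∧ ∀ x y : X, x ∈ K → y - x ∈ K → ‖x‖ ≤ l * ‖y‖)
    -- F maps K into K and is ≼-decreasing
    (F : X → X) (hFmaps : ∀ x ∈ K, F x ∈ K)
    (hFdec : ∀ x ∈ K, ∀ y ∈ K, coneLe K x y → coneLe K (F y) (F x))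
    -- F satisfies condition (H¹)
    (hH1 : ∀ u ∈ K, ∀ v ∈ K, F u = v → F v = u → u = v)
    -- F is compact: continuous and maps bounded sets to relatively compact sets
    (hFcont : ContinuousOn F K)
    (hFcomp : ∀ C ⊆ K, Bornology.IsBounded C → IsCompact (closure (F '' C))) :
    ∃ x : X, x ∈ K ∧ F x = x ∧ coneLe K x (F 0) ∧
      (∀ y ∈ K, F y = y → y = x) ∧
      ∀ z ∈ K, Filter.Tendsto (fun n => F^[n] z) Filter.atTop (nhds x) := by
  obtain ⟨l, -, hnorm⟩ := hnormal
  have hmaps : MapsTo F K K := fun x hx => hFmaps x hx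
  have horbit : ∀ n, F^[n] 0 ∈ K := fun n => hmaps.iterate n hK0
  obtain ⟨x, heven⟩ := ConeAntitoneOn.exists_tendsto_iterate_even hKclosed hK0 hKadd hnorm
    hFdec hmaps hFcomp
  have hxK : x ∈ K := hKclosed.mem_of_tendsto heven (Eventually.of_forall fun n => horbit _)
  have hodd : Tendsto (fun n => F^[2 * n + 1] 0) atTop (𝓝 (F x)) := by
    simpa only [Function.iterate_succ_apply'] using
      hFcont.tendsto_comp_of_mem hxK (fun n => horbit _) heven
  have hFFx : F (F x) = x := by
    refine tendsto_nhds_unique ?_ ((tendsto_add_atTop_iff_nat 1).2 heven)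
    simpa only [Function.iterate_succ_apply', mul_add] using
      hFcont.tendsto_comp_of_mem (hmaps hxK) (fun n => horbit _) hodd
  have hFx : F x = x := (hH1 x hxK (F x) (hmaps hxK) rfl hFFx).symm
  rw [hFx] at hodd
  have hconv := fun z (hz : z ∈ K) => ConeAntitoneOn.tendsto_iterate hK0 hnorm hFdec hmaps
    heven hodd hz
  refine ⟨x, hxK, hFx, hFx ▸ hFdec 0 hK0 x hxK (zero_coneLe_iff.2 hxK),
    fun y hy hFy => tendsto_nhds_unique ?_ (hconv y hy), hconv⟩
  simp only [Function.iterate_fixed hFy, tendsto_const_nhds]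

/-- Theorem 5.2, case (a): in a normal partially ordered Banach space with order induced
by the closed convex cone `K`, an ≼-decreasing compact mapping `F : K → K` satisfying
condition (H¹) has a unique fixed point `x*` in `K`; moreover `x* ≼ F 0` and for every
`z ∈ K` the iterates `Fⁿ z` converge in norm to `x*`. -/
theorem decreasing_compact_unique_fixed_point_of_normal
    {X : Type*} [NormedAddCommGroup X] [NormedSpace ℝ X] [CompleteSpace X]
    (K : Set X) (hKclosed : IsClosed K) (hK0 : (0 : X) ∈ K)
    (hKadd : ∀ x ∈ K, ∀ y ∈ K, x + y ∈ K)
    (hKsmul : ∀ c : ℝ, 0 ≤ c → ∀ x ∈ K, c • x ∈ K)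
    (hKpointed : ∀ x ∈ K, -x ∈ K → x = 0)
    -- normality of the order
    (hnormal : ∃ l : ℝ, 0 < l ∧ ∀ x y : X, x ∈ K → y - x ∈ K → ‖x‖ ≤ l * ‖y‖)
    -- F maps K into K and is ≼-decreasing
    (F : X → X) (hFmaps : ∀ x ∈ K, F x ∈ K)
    (hFdec : ∀ x ∈ K, ∀ y ∈ K, coneLe K x y → coneLe K (F y) (F x))
    -- F satisfies condition (H¹)
    (hH1 : ∀ u ∈ K, ∀ v ∈ K, F u = v → F v = u → u = v)
    -- F is compact: continuous and maps bounded sets to relatively compact sets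
    (hFcont : ContinuousOn F K)
    (hFcomp : ∀ C ⊆ K, Bornology.IsBounded C → IsCompact (closure (F '' C))) :
    ∃ x : X, x ∈ K ∧ F x = x ∧ coneLe K x (F 0) ∧
      (∀ y ∈ K, F y = y → y = x) ∧
      ∀ z ∈ K, Filter.Tendsto (fun n => F^[n] z) Filter.atTop (nhds x) :=
  decreasing_compact_unique_fixed_point_of_normal_general K hKclosed hK0 hKadd hnormal F hFmaps
    hFdec hH1 hFcont hFcomp
end
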